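/- arXiv:2502.03985 — 5 statements merged into one kernel-verified Lean document; each statement's English description precedes it below -/
import Mathlib

section
/- Assume in addition that R_ρ is positive semidefinite. Let I ∈ ℂ^N be nonzero and ξ ∈ ℂ with (X₀ − i·R_ρ)·I = ξ·R₀·I. Then Im ξ ≤ 0, and Im ξ = 0 if and only if R_ρ·I = 0. -/
/-!
Pair the eigenvalue equation with `I`. Since the three matrices are Hermitian, the forms
`a = I⋆X₀I`, `b = I⋆RρI`, `c = I⋆R₀I` are real, so taking imaginary parts of
`a - i b = ξ c` gives `Im ξ · c = -b` with `c > 0` and `b ≥ 0`. For a positive semidefinite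
`Rρ`, the form `b` vanishes exactly when `Rρ I = 0`.
-/

open Matrix
open scoped ComplexOrder

namespace Matrix

variable {n : Type*} [Fintype n]

theorem PosSemidef.map_ofReal {M : Matrix n n ℝ} (hM : M.PosSemidef) :
    (M.map Complex.ofReal).PosSemidef := by
  classical
  obtain ⟨B, rfl⟩ : ∃ B : Matrix n n ℝ, M = Bᴴ * B := by
    open MatrixOrder in
    exact CStarAlgebra.nonneg_iff_eq_star_mul_self.mp hM.nonneg
  change ((Bᴴ * B).map Complex.ofRealHom).PosSemidef
  rw [Matrix.map_mul, conjTranspose_map (⇑Complex.ofRealHom) fun r ↦ (Complex.conj_ofReal r).symm]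
  exact posSemidef_conjTranspose_mul_self _

theorem PosDef.map_ofReal {M : Matrix n n ℝ} (hM : M.PosDef) :
    (M.map Complex.ofReal).PosDef := by
  classical
  rw [hM.posSemidef.map_ofReal.posDef_iff_det_ne_zero,
    show M.map Complex.ofReal = Complex.ofRealHom.mapMatrix M from rfl, ← RingHom.map_det]
  exact Complex.ofReal_ne_zero.mpr hM.det_pos.ne'

theorem im_mul_re_dotProduct_eq_neg_re_of_mulVec_sub_I_smul_eq {A R B : Matrix n n ℂ}
    (hA : A.IsHermitian) (hR : R.IsHermitian) (hB : B.IsHermitian) {x : n → ℂ} {ξ : ℂ}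
    (h : (A - Complex.I • R) *ᵥ x = ξ • B *ᵥ x) :
    ξ.im * (star x ⬝ᵥ B *ᵥ x).re = -(star x ⬝ᵥ R *ᵥ x).re := by
  have hpair : star x ⬝ᵥ A *ᵥ x - Complex.I * star x ⬝ᵥ R *ᵥ x = ξ * star x ⬝ᵥ B *ᵥ x := by
    simpa only [sub_mulVec, smul_mulVec, dotProduct_sub, dotProduct_smul, smul_eq_mul]
      using congrArg (star x ⬝ᵥ ·) h
  have hA_im : (star x ⬝ᵥ A *ᵥ x).im = 0 := hA.im_star_dotProduct_mulVec_self x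
  have hR_im : (star x ⬝ᵥ R *ᵥ x).im = 0 := hR.im_star_dotProduct_mulVec_self x
  have hB_im : (star x ⬝ᵥ B *ᵥ x).im = 0 := hB.im_star_dotProduct_mulVec_self x
  have him := congrArg Complex.im hpair
  simp only [Complex.sub_im, Complex.mul_im, Complex.I_re, Complex.I_im, hA_im, hR_im,
    hB_im] at him
  linarith

theorem im_nonpos_and_im_eq_zero_iff_of_mulVec_sub_I_smul_eq {A R B : Matrix n n ℂ}
    (hA : A.IsHermitian) (hR : R.PosSemidef) (hB : B.PosDef) {x : n → ℂ} (hx : x ≠ 0) {ξ : ℂ}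
    (h : (A - Complex.I • R) *ᵥ x = ξ • B *ᵥ x) :
    ξ.im ≤ 0 ∧ (ξ.im = 0 ↔ R *ᵥ x = 0) := by
  have hξ := im_mul_re_dotProduct_eq_neg_re_of_mulVec_sub_I_smul_eq hA hR.isHermitian
    hB.isHermitian h
  have hc : 0 < (star x ⬝ᵥ B *ᵥ x).re := hB.re_dotProduct_pos hx
  have hb : 0 ≤ (star x ⬝ᵥ R *ᵥ x).re := hR.re_dotProduct_nonneg x
  refine ⟨nonpos_of_mul_nonpos_left (by linarith) hc, ?_⟩
  have hR_im : (star x ⬝ᵥ R *ᵥ x).im = 0 := hR.isHermitian.im_star_dotProduct_mulVec_self x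
  rw [← hR.dotProduct_mulVec_zero_iff, Complex.ext_iff, hR_im, ← mul_left_inj' hc.ne', zero_mul,
    hξ, neg_eq_zero, Complex.zero_re, Complex.zero_im, eq_self_iff_true, and_true]

end Matrix

theorem lossy_cm_im_nonpos_general
    (N : ℕ)
    (X₀ Rρ R₀ : Matrix (Fin N) (Fin N) ℝ)
    (hX : X₀.IsSymm)
    (hPD : R₀.PosDef) (hPSD : Rρ.PosSemidef)
    (I : Fin N → ℂ) (hI : I ≠ 0) (ξ : ℂ)
    (heig : (X₀.map Complex.ofReal - Complex.I • Rρ.map Complex.ofReal).mulVec I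
            = ξ • (R₀.map Complex.ofReal).mulVec I) :
    ξ.im ≤ 0 ∧ (ξ.im = 0 ↔ (Rρ.map Complex.ofReal).mulVec I = 0) :=
  im_nonpos_and_im_eq_zero_iff_of_mulVec_sub_I_smul_eq
    ((isHermitian_iff_isSymm.mpr hX).map _ fun r ↦ (Complex.conj_ofReal r).symm)
    hPSD.map_ofReal hPD.map_ofReal hI heig

/-- For a positive semidefinite loss matrix, the imaginary part of a lossy
characteristic number is nonpositive and vanishes precisely for lossless modes. -/
theorem lossy_cm_im_nonpos
    (N : ℕ) (hN : 0 < N)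
    (X₀ Rρ R₀ : Matrix (Fin N) (Fin N) ℝ)
    (hX : X₀.IsSymm) (hRρ : Rρ.IsSymm) (hR₀ : R₀.IsSymm)
    (hPD : R₀.PosDef) (hPSD : Rρ.PosSemidef)
    (I : Fin N → ℂ) (hI : I ≠ 0) (ξ : ℂ)
    (heig : (X₀.map Complex.ofReal - Complex.I • Rρ.map Complex.ofReal).mulVec I
            = ξ • (R₀.map Complex.ofReal).mulVec I) :
    ξ.im ≤ 0 ∧ (ξ.im = 0 ↔ (Rρ.map Complex.ofReal).mulVec I = 0) :=
  lossy_cm_im_nonpos_general N X₀ Rρ R₀ hX hPD hPSD I hI ξ heig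
end

section
/- Let X₀ and R₀ be functions from ℝ to real symmetric N×N matrices that are differentiable at ω₀ with ω₀ ≠ 0, let λ : ℝ → ℝ and I : ℝ → ℝ^N be differentiable at ω₀ with X₀(ω)·I(ω) = λ(ω)·R₀(ω)·I(ω) for all ω in a neighborhood of ω₀, I(ω₀)ᵀ·R₀(ω₀)·I(ω₀) ≠ 0, and λ(ω₀) = 0 (resonance). Then the modal Q-factor Q = ( I(ω₀)ᵀ·(ω₀·X₀'(ω₀))·I(ω₀) ) / ( 2·I(ω₀)ᵀ·R₀(ω₀)·I(ω₀) ) satisfies Q = (ω₀/2)·λ'(ω₀) exactly. -/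
/-!
Pairing the eigen-relation `X₀ I = λ R₀ I` with the fixed vector `I(ω₀)` gives a scalar function of
`ω` that vanishes near `ω₀`, so its derivative at `ω₀` vanishes. The term carrying `I'(ω₀)` is
`I(ω₀)ᵀ (X₀ - λ R₀)(ω₀) I'(ω₀)`, which is zero because `I(ω₀)` is also a left eigenvector
(`X₀(ω₀)` is symmetric), and the `R₀'` term is multiplied by `λ(ω₀) = 0`. What remains is
`I₀ᵀ X₀' I₀ = λ'(ω₀) I₀ᵀ R₀ I₀`.
-/

open Matrix

namespace Matrix

variable {𝕜 : Type*} [NontriviallyNormedField 𝕜] {m n : Type*} [Fintype m] [Fintype n]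

theorem hasDerivAt_dotProduct_mulVec (u : m → 𝕜) {A : 𝕜 → Matrix m n 𝕜} {A' : Matrix m n 𝕜}
    {v : 𝕜 → n → 𝕜} {v' : n → 𝕜} {x : 𝕜}
    (hA : ∀ i j, HasDerivAt (fun t => A t i j) (A' i j) x)
    (hv : ∀ j, HasDerivAt (fun t => v t j) (v' j) x) :
    HasDerivAt (fun t => u ⬝ᵥ A t *ᵥ v t) (u ⬝ᵥ A' *ᵥ v x + u ⬝ᵥ A x *ᵥ v') x := by
  have hsum : HasDerivAt (fun t => ∑ i, ∑ j, u i * (A t i j * v t j))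
      (∑ i, ∑ j, u i * (A' i j * v x j + A x i j * v' j)) x :=
    HasDerivAt.fun_sum fun i _ => HasDerivAt.fun_sum fun j _ =>
      ((hA i j).mul (hv j)).const_mul (u i)
  convert hsum using 1
  · ext t
    simp only [dotProduct, mulVec, Finset.mul_sum]
  · simp only [dotProduct, mulVec, Finset.mul_sum, ← Finset.sum_add_distrib, mul_add]

theorem hellmann_feynman {A B : 𝕜 → Matrix m n 𝕜} {A' B' : Matrix m n 𝕜}
    {lam : 𝕜 → 𝕜} {lam' : 𝕜} {v : 𝕜 → n → 𝕜} {w : m → 𝕜} {x : 𝕜}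
    (hA : ∀ i j, HasDerivAt (fun t => A t i j) (A' i j) x)
    (hB : ∀ i j, HasDerivAt (fun t => B t i j) (B' i j) x)
    (hlam : HasDerivAt lam lam' x) (hv : ∀ j, DifferentiableAt 𝕜 (fun t => v t j) x)
    (heig : ∀ᶠ t in nhds x, A t *ᵥ v t = lam t • B t *ᵥ v t)
    (hw : w ᵥ* A x = lam x • w ᵥ* B x) :
    w ⬝ᵥ A' *ᵥ v x = lam' * (w ⬝ᵥ B x *ᵥ v x) + lam x * (w ⬝ᵥ B' *ᵥ v x) := by
  set v' : n → 𝕜 := fun j => deriv (fun t => v t j) x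
  have hv' : ∀ j, HasDerivAt (fun t => v t j) (v' j) x := fun j => (hv j).hasDerivAt
  have hderiv := (hasDerivAt_dotProduct_mulVec w hA hv').sub
    (hlam.mul (hasDerivAt_dotProduct_mulVec w hB hv'))
  have hzero : (fun t => w ⬝ᵥ A t *ᵥ v t - lam t * (w ⬝ᵥ B t *ᵥ v t)) =ᶠ[nhds x] fun _ => 0 := by
    filter_upwards [heig] with t ht
    rw [ht, dotProduct_smul, smul_eq_mul, sub_self]
  have hv'_term : w ⬝ᵥ A x *ᵥ v' = lam x * (w ⬝ᵥ B x *ᵥ v') := by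
    rw [dotProduct_mulVec, hw, smul_dotProduct, smul_eq_mul, ← dotProduct_mulVec]
  have h := hderiv.unique ((hasDerivAt_const x 0).congr_of_eventuallyEq hzero)
  linear_combination h - hv'_term

end Matrix

theorem modal_Q_factor_at_resonance_general
    (N : ℕ)
    (X₀ R₀ : ℝ → Matrix (Fin N) (Fin N) ℝ)
    (hsymX : ∀ ω, (X₀ ω).IsSymm)
    (X₀' R₀' : Matrix (Fin N) (Fin N) ℝ) (ω₀ : ℝ)
    (hdX : ∀ i j, HasDerivAt (fun ω => X₀ ω i j) (X₀' i j) ω₀)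
    (hdR : ∀ i j, HasDerivAt (fun ω => R₀ ω i j) (R₀' i j) ω₀)
    (lam : ℝ → ℝ) (lam' : ℝ) (I : ℝ → Fin N → ℝ)
    (hlam : HasDerivAt lam lam' ω₀)
    (hI : ∀ i, DifferentiableAt ℝ (fun ω => I ω i) ω₀)
    (heig : ∀ᶠ ω in nhds ω₀, (X₀ ω).mulVec (I ω) = lam ω • (R₀ ω).mulVec (I ω))
    (hnz : dotProduct (I ω₀) ((R₀ ω₀).mulVec (I ω₀)) ≠ 0)
    (hres : lam ω₀ = 0) :
    dotProduct (I ω₀) ((ω₀ • X₀').mulVec (I ω₀)) /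
        (2 * dotProduct (I ω₀) ((R₀ ω₀).mulVec (I ω₀)))
      = ω₀ / 2 * lam' := by
  have hleft : I ω₀ ᵥ* X₀ ω₀ = lam ω₀ • I ω₀ ᵥ* R₀ ω₀ := by
    rw [← (hsymX ω₀).eq, vecMul_transpose, heig.self_of_nhds, hres, zero_smul, zero_smul]
  have hHF := hellmann_feynman hdX hdR hlam hI heig hleft
  rw [hres, zero_mul, add_zero] at hHF
  rw [smul_mulVec, dotProduct_smul, smul_eq_mul, hHF]
  field_simp

/-- At resonance, the modal Q-factor equals `(ω₀/2)·λ'(ω₀)` exactly. -/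
theorem modal_Q_factor_at_resonance
    (N : ℕ) (hN : 0 < N)
    (X₀ R₀ : ℝ → Matrix (Fin N) (Fin N) ℝ)
    (hsymX : ∀ ω, (X₀ ω).IsSymm) (hsymR : ∀ ω, (R₀ ω).IsSymm)
    (X₀' R₀' : Matrix (Fin N) (Fin N) ℝ) (ω₀ : ℝ) (hω₀ : ω₀ ≠ 0)
    (hdX : ∀ i j, HasDerivAt (fun ω => X₀ ω i j) (X₀' i j) ω₀)
    (hdR : ∀ i j, HasDerivAt (fun ω => R₀ ω i j) (R₀' i j) ω₀)
    (lam : ℝ → ℝ) (lam' : ℝ) (I : ℝ → Fin N → ℝ)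
    (hlam : HasDerivAt lam lam' ω₀)
    (hI : ∀ i, DifferentiableAt ℝ (fun ω => I ω i) ω₀)
    (heig : ∀ᶠ ω in nhds ω₀, (X₀ ω).mulVec (I ω) = lam ω • (R₀ ω).mulVec (I ω))
    (hnz : dotProduct (I ω₀) ((R₀ ω₀).mulVec (I ω₀)) ≠ 0)
    (hres : lam ω₀ = 0) :
    dotProduct (I ω₀) ((ω₀ • X₀').mulVec (I ω₀)) /
        (2 * dotProduct (I ω₀) ((R₀ ω₀).mulVec (I ω₀)))
      = ω₀ / 2 * lam' :=
  modal_Q_factor_at_resonance_general N X₀ R₀ hsymX X₀' R₀' ω₀ hdX hdR lam lam' I hlam hI heig hnz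
    hres
end

section
/- Let X₀ and R₀ be real symmetric N×N matrices, let ρ ↦ R_ρ(ρ) be a function from ℝ to real symmetric N×N matrices differentiable at ρ₀, and let ξ : ℝ → ℂ and I : ℝ → ℂ^N be differentiable at ρ₀ with (X₀ − i·R_ρ(ρ))·I(ρ) = ξ(ρ)·R₀·I(ρ) for all ρ in a neighborhood of ρ₀. If I(ρ₀)ᵀ·R₀·I(ρ₀) ≠ 0, then ξ'(ρ₀) = −i · ( I(ρ₀)ᵀ·R_ρ'(ρ₀)·I(ρ₀) ) / ( I(ρ₀)ᵀ·R₀·I(ρ₀) ), where R_ρ' denotes the entrywise derivative and ᵀ the non-conjugate transpose. -/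
/-!
Write the eigen-equation as `(A ρ - ξ ρ • B) *ᵥ I ρ = 0` with `A ρ = X₀ - i R_ρ(ρ)`, `B = R₀`,
pair it with the fixed vector `I ρ₀` through the bilinear form `uᵀ v`, and differentiate at `ρ₀`.
Because `A ρ₀ - ξ ρ₀ • B` is symmetric and annihilates `I ρ₀`, the term containing the unknown
derivative of `I` vanishes, leaving `I ρ₀ᵀ (A' - ξ' • B) I ρ₀ = 0` with `A' = -i R_ρ'`.
-/

open Filter Matrix Topology

section

variable {𝕜 𝔸 m n : Type*} [NontriviallyNormedField 𝕜] [NormedCommRing 𝔸] [NormedAlgebra 𝕜 𝔸]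
  [Fintype m] [Fintype n]

theorem HasDerivAt.dotProduct_mulVec {u : m → 𝔸} {M : 𝕜 → Matrix m n 𝔸} {M' : Matrix m n 𝔸}
    {v : 𝕜 → n → 𝔸} {v' : n → 𝔸} {x : 𝕜}
    (hM : ∀ i j, HasDerivAt (fun y => M y i j) (M' i j) x)
    (hv : ∀ j, HasDerivAt (fun y => v y j) (v' j) x) :
    HasDerivAt (fun y => u ⬝ᵥ (M y *ᵥ v y)) (u ⬝ᵥ (M' *ᵥ v x) + u ⬝ᵥ (M x *ᵥ v')) x := by
  have h : HasDerivAt (fun y => u ⬝ᵥ (M y *ᵥ v y))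
      (∑ i, u i * ∑ j, (M' i j * v x j + M x i j * v' j)) x :=
    HasDerivAt.fun_sum fun i _ =>
      (HasDerivAt.fun_sum fun j _ => (hM i j).fun_mul (hv j)).const_mul (u i)
  convert h using 1
  simp only [dotProduct, mulVec, mul_add, Finset.sum_add_distrib]

theorem Matrix.IsSymm.eigenvalue_deriv_mul_dotProduct {A : 𝕜 → Matrix n n 𝔸}
    {A' B : Matrix n n 𝔸} {ξ : 𝕜 → 𝔸} {ξ' : 𝔸} {v : 𝕜 → n → 𝔸} {x : 𝕜}
    (hAx : (A x).IsSymm) (hB : B.IsSymm)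
    (hA : ∀ i j, HasDerivAt (fun y => A y i j) (A' i j) x) (hξ : HasDerivAt ξ ξ' x)
    (hv : ∀ j, DifferentiableAt 𝕜 (fun y => v y j) x)
    (heig : ∀ᶠ y in 𝓝 x, A y *ᵥ v y = ξ y • B *ᵥ v y) :
    ξ' * (v x ⬝ᵥ B *ᵥ v x) = v x ⬝ᵥ A' *ᵥ v x := by
  set M : 𝕜 → Matrix n n 𝔸 := fun y => A y - ξ y • B
  have hM : ∀ i j, HasDerivAt (fun y => M y i j) ((A' - ξ' • B) i j) x := fun i j => by
    simpa [M] using (hA i j).fun_sub (hξ.mul_const (B i j))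
  have hMv : ∀ᶠ y in 𝓝 x, M y *ᵥ v y = 0 := by
    filter_upwards [heig] with y hy
    rw [sub_mulVec, smul_mulVec, hy, sub_self]
  have hpair : ∀ᶠ y in 𝓝 x, v x ⬝ᵥ (M y *ᵥ v y) = 0 := by
    filter_upwards [hMv] with y hy
    rw [hy, dotProduct_zero]
  have hderiv := HasDerivAt.dotProduct_mulVec (u := v x) hM fun j => (hv j).hasDerivAt
  have hcancel : ∀ w, v x ⬝ᵥ (M x *ᵥ w) = 0 := fun w => by
    rw [dotProduct_mulVec, ← mulVec_transpose, (hAx.sub (hB.smul (ξ x))).eq, hMv.self_of_nhds,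
      zero_dotProduct]
  have h0 := hderiv.unique ((hasDerivAt_const x 0).congr_of_eventuallyEq hpair)
  rw [hcancel, add_zero, sub_mulVec, smul_mulVec, dotProduct_sub, dotProduct_smul,
    smul_eq_mul, sub_eq_zero] at h0
  exact h0.symm

end

theorem lossy_cm_eigenvalue_design_derivative_general
    (N : ℕ)
    (X₀ R₀ : Matrix (Fin N) (Fin N) ℝ)
    (hX : X₀.IsSymm) (hR₀ : R₀.IsSymm)
    (Rρ : ℝ → Matrix (Fin N) (Fin N) ℝ)
    (hsym : ∀ ρ, (Rρ ρ).IsSymm)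
    (Rρ' : Matrix (Fin N) (Fin N) ℝ) (ρ₀ : ℝ)
    (hdRρ : ∀ i j, HasDerivAt (fun ρ => Rρ ρ i j) (Rρ' i j) ρ₀)
    (ξ : ℝ → ℂ) (ξ' : ℂ) (I : ℝ → Fin N → ℂ)
    (hξ : HasDerivAt ξ ξ' ρ₀)
    (hI : ∀ i, DifferentiableAt ℝ (fun ρ => I ρ i) ρ₀)
    (heig : ∀ᶠ ρ in nhds ρ₀,
      (X₀.map Complex.ofReal - Complex.I • (Rρ ρ).map Complex.ofReal).mulVec (I ρ)
        = ξ ρ • (R₀.map Complex.ofReal).mulVec (I ρ))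
    (hnz : dotProduct (I ρ₀) ((R₀.map Complex.ofReal).mulVec (I ρ₀)) ≠ 0) :
    ξ' = -Complex.I *
        (dotProduct (I ρ₀) ((Rρ'.map Complex.ofReal).mulVec (I ρ₀)) /
          dotProduct (I ρ₀) ((R₀.map Complex.ofReal).mulVec (I ρ₀))) := by
  have hA : ∀ i j, HasDerivAt
      (fun ρ => (X₀.map Complex.ofReal - Complex.I • (Rρ ρ).map Complex.ofReal) i j)
      ((-Complex.I • Rρ'.map Complex.ofReal) i j) ρ₀ := fun i j => by
    simpa using
      (hasDerivAt_const ρ₀ (X₀ i j : ℂ)).fun_sub ((hdRρ i j).ofReal_comp.const_mul Complex.I)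
  have key := Matrix.IsSymm.eigenvalue_deriv_mul_dotProduct
    (A := fun ρ => X₀.map Complex.ofReal - Complex.I • (Rρ ρ).map Complex.ofReal)
    ((hX.map _).sub ((hsym ρ₀).map _ |>.smul _)) (hR₀.map _) hA hξ hI heig
  rw [smul_mulVec, dotProduct_smul, smul_eq_mul] at key
  rw [mul_div_assoc', eq_div_iff hnz, key]

/-- Derivative of a lossy characteristic number with respect to the design
variable: `ξ'(ρ₀) = −i·(Iᵀ R_ρ'(ρ₀) I)/(Iᵀ R₀ I)`. -/
theorem lossy_cm_eigenvalue_design_derivative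
    (N : ℕ) (hN : 0 < N)
    (X₀ R₀ : Matrix (Fin N) (Fin N) ℝ)
    (hX : X₀.IsSymm) (hR₀ : R₀.IsSymm)
    (Rρ : ℝ → Matrix (Fin N) (Fin N) ℝ)
    (hsym : ∀ ρ, (Rρ ρ).IsSymm)
    (Rρ' : Matrix (Fin N) (Fin N) ℝ) (ρ₀ : ℝ)
    (hdRρ : ∀ i j, HasDerivAt (fun ρ => Rρ ρ i j) (Rρ' i j) ρ₀)
    (ξ : ℝ → ℂ) (ξ' : ℂ) (I : ℝ → Fin N → ℂ)
    (hξ : HasDerivAt ξ ξ' ρ₀)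
    (hI : ∀ i, DifferentiableAt ℝ (fun ρ => I ρ i) ρ₀)
    (heig : ∀ᶠ ρ in nhds ρ₀,
      (X₀.map Complex.ofReal - Complex.I • (Rρ ρ).map Complex.ofReal).mulVec (I ρ)
        = ξ ρ • (R₀.map Complex.ofReal).mulVec (I ρ))
    (hnz : dotProduct (I ρ₀) ((R₀.map Complex.ofReal).mulVec (I ρ₀)) ≠ 0) :
    ξ' = -Complex.I *
        (dotProduct (I ρ₀) ((Rρ'.map Complex.ofReal).mulVec (I ρ₀)) /
          dotProduct (I ρ₀) ((R₀.map Complex.ofReal).mulVec (I ρ₀))) :=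
  lossy_cm_eigenvalue_design_derivative_general N X₀ R₀ hX hR₀ Rρ hsym Rρ' ρ₀ hdRρ ξ ξ' I hξ hI heig
    hnz
end

section
/- (Adjoint sensitivity formula.) Let X₀, R₀ be real symmetric N×N matrices, ρ ↦ R_ρ(ρ) a function into real symmetric N×N matrices differentiable at ρ₀, and f : ℝ^N × ℝ^N × ℝ × ℝ × ℝ → ℝ differentiable at the point P₀ = (I_Re(ρ₀), I_Im(ρ₀), λ(ρ₀), δ(ρ₀), ρ₀). Suppose I_Re, I_Im : ℝ → ℝ^N and λ, δ : ℝ → ℝ are differentiable at ρ₀ and satisfy, for all ρ in a neighborhood of ρ₀: (i) (X₀ − λ(ρ)R₀)·I_Re(ρ) + (R_ρ(ρ) − δ(ρ)R₀)·I_Im(ρ) = 0; (ii) −(R_ρ(ρ) − δ(ρ)R₀)·I_Re(ρ) + (X₀ − λ(ρ)R₀)·I_Im(ρ) = 0; (iii) I_Re(ρ)ᵀ·R₀·I_Re(ρ) + I_Im(ρ)ᵀ·R₀·I_Im(ρ) = 1; (iv) the k-th entry of I_Im(ρ) is 0, for a fixed index k. Suppose z_Re, z_Im ∈ ℝ^N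 and a, b ∈ ℝ satisfy, with all partial derivatives of f evaluated at P₀ and all curves evaluated at ρ₀: (A) ∂f/∂λ = z_Reᵀ·R₀·I_Re + z_Imᵀ·R₀·I_Im; (B) ∂f/∂δ = z_Reᵀ·R₀·I_Im − z_Imᵀ·R₀·I_Re; (C) ∇_{I_Re} f + (X₀ − λR₀)·z_Re − (R_ρ − δR₀)·z_Im + 2a·R₀·I_Re = 0; (D) ∇_{I_Im} f + (R_ρ − δR₀)·z_Re + (X₀ − λR₀)·z_Im + 2a·R₀·I_Im + b·e_k = 0, where e_k is the k-th standard basis vector. Then the function ρ ↦ f(I_Re(ρ), I_Im(ρ), λ(ρ), δ(ρ), ρ) is differentiable at ρ₀ with derivative ∂f/∂ρ(P₀) + z_Reᵀ·R_ρ'(ρ₀)·I_Im(ρ₀) − z_Imᵀ·R_ρ'(ρ₀)·I_Re(ρ₀). -/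
/-!
The constraints (i)–(iv) hold identically near `ρ₀`, so their derivatives vanish there. By the
chain rule the derivative of the objective is `Df` applied to the unknown velocity
`(I_Re', I_Im', λ', δ', 1)`. Adding to it the differentiated constraints paired with the
multipliers `z_Re, z_Im, a, b` and moving every matrix onto the multipliers by symmetry, the
adjoint equations (A)–(D) cancel all terms in `I_Re', I_Im', λ', δ'`; only `∂f/∂ρ` and the terms
in `R_ρ'` survive.
-/

open Matrix

theorem Matrix.IsSymm.dotProduct_mulVec_comm {ι R : Type*} [Fintype ι] [CommSemiring R]
    {M : Matrix ι ι R} (hM : M.IsSymm) (x y : ι → R) : x ⬝ᵥ M *ᵥ y = y ⬝ᵥ M *ᵥ x := by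
  rw [dotProduct_mulVec, ← mulVec_transpose, hM.eq, dotProduct_comm]

theorem LinearMap.apply_eq_dotProduct {ι R : Type*} [Fintype ι] [DecidableEq ι] [CommSemiring R]
    (L : (ι → R) →ₗ[R] R) (x : ι → R) : L x = x ⬝ᵥ fun i => L (Pi.single i 1) := by
  simp only [L.pi_apply_eq_sum_univ x, dotProduct, smul_eq_mul]
  congr! 3 with i
  ext j
  simp [Pi.single_apply, eq_comm]

theorem ContinuousLinearMap.apply_eq_partials {ι R : Type*} [Fintype ι] [DecidableEq ι]
    [CommSemiring R] [TopologicalSpace R] (L : (ι → R) × (ι → R) × R × R × R →L[R] R)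
    (u w : ι → R) (l d r : R) :
    L (u, w, l, d, r) =
      u ⬝ᵥ (fun i => L (Pi.single i 1, 0, 0, 0, 0)) + w ⬝ᵥ (fun i => L (0, Pi.single i 1, 0, 0, 0))
        + l * L (0, 0, 1, 0, 0) + d * L (0, 0, 0, 1, 0) + r * L (0, 0, 0, 0, 1) := by
  have hsplit : ((u, w, l, d, r) : (ι → R) × (ι → R) × R × R × R) =
      (u, 0, 0, 0, 0) + (0, w, 0, 0, 0) + l • (0, 0, 1, 0, 0) + d • (0, 0, 0, 1, 0)
        + r • (0, 0, 0, 0, 1) := by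
    simp
  have hu : L (u, 0, 0, 0, 0) = u ⬝ᵥ fun i => L (Pi.single i 1, 0, 0, 0, 0) :=
    (L.toLinearMap ∘ₗ LinearMap.inl R _ _).apply_eq_dotProduct u
  have hw : L (0, w, 0, 0, 0) = w ⬝ᵥ fun i => L (0, Pi.single i 1, 0, 0, 0) :=
    (L.toLinearMap ∘ₗ LinearMap.inr R _ _ ∘ₗ LinearMap.inl R _ _).apply_eq_dotProduct w
  simp only [hsplit, map_add, map_smul, smul_eq_mul, hu, hw]

section Calculus

variable {𝕜 ι κ : Type*} [NontriviallyNormedField 𝕜] {x : 𝕜}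

theorem HasDerivAt.eq_zero_of_eventuallyEq_const {E : Type*} [NormedAddCommGroup E]
    [NormedSpace 𝕜 E] {f : 𝕜 → E} {f' c : E} (hf : HasDerivAt f f' x)
    (hc : f =ᶠ[nhds x] fun _ => c) : f' = 0 :=
  hf.unique ((hasDerivAt_const x c).congr_of_eventuallyEq hc)

theorem HasDerivAt.dotProduct [Fintype ι] {u w : 𝕜 → ι → 𝕜} {u' w' : ι → 𝕜}
    (hu : HasDerivAt u u' x) (hw : HasDerivAt w w' x) :
    HasDerivAt (fun t => u t ⬝ᵥ w t) (u' ⬝ᵥ w x + u x ⬝ᵥ w') x := by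
  have h := HasDerivAt.fun_sum (u := Finset.univ) fun i _ =>
    (hasDerivAt_pi.1 hu i).fun_mul (hasDerivAt_pi.1 hw i)
  rwa [Finset.sum_add_distrib] at h

theorem HasDerivAt.mulVec [Fintype ι] {M : 𝕜 → Matrix κ ι 𝕜} {M' : Matrix κ ι 𝕜}
    {v : 𝕜 → ι → 𝕜} {v' : ι → 𝕜} (hM : ∀ i j, HasDerivAt (fun t => M t i j) (M' i j) x)
    (hv : HasDerivAt v v' x) :
    HasDerivAt (fun t => M t *ᵥ v t) (M' *ᵥ v x + M x *ᵥ v') x :=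
  hasDerivAt_pi.2 fun i => (hasDerivAt_pi.2 (hM i)).dotProduct hv

theorem HasDerivAt.dotProduct_mulVec_self [Fintype ι] {R : Matrix ι ι 𝕜} (hR : R.IsSymm)
    {v : 𝕜 → ι → 𝕜} {v' : ι → 𝕜} (hv : HasDerivAt v v' x) :
    HasDerivAt (fun t => v t ⬝ᵥ R *ᵥ v t) (2 * (v x ⬝ᵥ R *ᵥ v')) x := by
  convert hv.dotProduct (HasDerivAt.mulVec (M' := 0) (fun i j => hasDerivAt_const x (R i j)) hv)
    using 1
  rw [zero_mulVec, zero_add, hR.dotProduct_mulVec_comm v' (v x)]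
  ring

end Calculus

theorem adjoint_identity {ι : Type*} [Fintype ι] [DecidableEq ι] {M₁ M₂ R S' : Matrix ι ι ℝ}
    (h₁ : M₁.IsSymm) (h₂ : M₂.IsSymm) (hR : R.IsSymm) {x y u w zRe zIm gRe gIm : ι → ℝ}
    {l d a b : ℝ} {k : ι}
    (e₁ : (-l • R) *ᵥ x + M₁ *ᵥ u + ((S' - d • R) *ᵥ y + M₂ *ᵥ w) = 0)
    (e₂ : -((S' - d • R) *ᵥ x + M₂ *ᵥ u) + ((-l • R) *ᵥ y + M₁ *ᵥ w) = 0)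
    (e₃ : 2 * (x ⬝ᵥ R *ᵥ u) + 2 * (y ⬝ᵥ R *ᵥ w) = 0) (e₄ : w k = 0)
    (hC : ∀ i, gRe i + (M₁ *ᵥ zRe) i - (M₂ *ᵥ zIm) i + 2 * a * (R *ᵥ x) i = 0)
    (hD : ∀ i, gIm i + (M₂ *ᵥ zRe) i + (M₁ *ᵥ zIm) i + 2 * a * (R *ᵥ y) i
      + b * (if i = k then 1 else 0) = 0) :
    u ⬝ᵥ gRe + w ⬝ᵥ gIm + l * (zRe ⬝ᵥ R *ᵥ x + zIm ⬝ᵥ R *ᵥ y)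
      + d * (zRe ⬝ᵥ R *ᵥ y - zIm ⬝ᵥ R *ᵥ x) = zRe ⬝ᵥ S' *ᵥ y - zIm ⬝ᵥ S' *ᵥ x := by
  have hgRe : gRe = -(M₁ *ᵥ zRe) + M₂ *ᵥ zIm - (2 * a) • (R *ᵥ x) := by
    ext i
    have := hC i
    simp only [Pi.add_apply, Pi.sub_apply, Pi.neg_apply, Pi.smul_apply, smul_eq_mul]
    linarith
  have hgIm : gIm = -(M₂ *ᵥ zRe) - M₁ *ᵥ zIm - (2 * a) • (R *ᵥ y) - b • Pi.single k 1 := by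
    ext i
    have := hD i
    simp only [Pi.sub_apply, Pi.neg_apply, Pi.smul_apply, smul_eq_mul, Pi.single_apply]
    linarith
  have p₁ := congrArg (zRe ⬝ᵥ ·) e₁
  have p₂ := congrArg (zIm ⬝ᵥ ·) e₂
  subst hgRe hgIm
  simp only [dotProduct_add, dotProduct_sub, dotProduct_neg, dotProduct_smul, sub_mulVec,
    smul_mulVec, smul_eq_mul, dotProduct_zero, dotProduct_single_one] at p₁ p₂ ⊢
  rw [h₁.dotProduct_mulVec_comm u, h₂.dotProduct_mulVec_comm u, h₂.dotProduct_mulVec_comm w,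
    h₁.dotProduct_mulVec_comm w, hR.dotProduct_mulVec_comm u, hR.dotProduct_mulVec_comm w, e₄]
  linear_combination -p₁ - p₂ - a * e₃

theorem adjoint_sensitivity_formula_general
    (N : ℕ)
    (X₀ R₀ : Matrix (Fin N) (Fin N) ℝ)
    (hX : X₀.IsSymm) (hR₀ : R₀.IsSymm)
    (Rρ : ℝ → Matrix (Fin N) (Fin N) ℝ) (hsym : ∀ ρ, (Rρ ρ).IsSymm)
    (Rρ' : Matrix (Fin N) (Fin N) ℝ) (ρ₀ : ℝ)
    (hdRρ : ∀ i j, HasDerivAt (fun ρ => Rρ ρ i j) (Rρ' i j) ρ₀)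
    (IRe IIm : ℝ → Fin N → ℝ) (lam del : ℝ → ℝ)
    (hIRe : DifferentiableAt ℝ IRe ρ₀) (hIIm : DifferentiableAt ℝ IIm ρ₀)
    (hlam : DifferentiableAt ℝ lam ρ₀) (hdel : DifferentiableAt ℝ del ρ₀)
    (k : Fin N)
    (hc1 : ∀ᶠ ρ in nhds ρ₀,
      (X₀ - lam ρ • R₀).mulVec (IRe ρ) + (Rρ ρ - del ρ • R₀).mulVec (IIm ρ) = 0)
    (hc2 : ∀ᶠ ρ in nhds ρ₀,
      -((Rρ ρ - del ρ • R₀).mulVec (IRe ρ)) + (X₀ - lam ρ • R₀).mulVec (IIm ρ) = 0)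
    (hc3 : ∀ᶠ ρ in nhds ρ₀,
      dotProduct (IRe ρ) (R₀.mulVec (IRe ρ)) +
        dotProduct (IIm ρ) (R₀.mulVec (IIm ρ)) = 1)
    (hc4 : ∀ᶠ ρ in nhds ρ₀, IIm ρ k = 0)
    (f : (Fin N → ℝ) × (Fin N → ℝ) × ℝ × ℝ × ℝ → ℝ)
    (Df : ((Fin N → ℝ) × (Fin N → ℝ) × ℝ × ℝ × ℝ) →L[ℝ] ℝ)
    (hf : HasFDerivAt f Df (IRe ρ₀, IIm ρ₀, lam ρ₀, del ρ₀, ρ₀))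
    (zRe zIm : Fin N → ℝ) (a b : ℝ)
    (hA : Df (0, 0, 1, 0, 0) =
      dotProduct zRe (R₀.mulVec (IRe ρ₀)) +
        dotProduct zIm (R₀.mulVec (IIm ρ₀)))
    (hB : Df (0, 0, 0, 1, 0) =
      dotProduct zRe (R₀.mulVec (IIm ρ₀)) -
        dotProduct zIm (R₀.mulVec (IRe ρ₀)))
    (hC : ∀ i, Df (Pi.single i 1, 0, 0, 0, 0)
        + (X₀ - lam ρ₀ • R₀).mulVec zRe i
        - (Rρ ρ₀ - del ρ₀ • R₀).mulVec zIm i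
        + 2 * a * R₀.mulVec (IRe ρ₀) i = 0)
    (hD : ∀ i, Df (0, Pi.single i 1, 0, 0, 0)
        + (Rρ ρ₀ - del ρ₀ • R₀).mulVec zRe i
        + (X₀ - lam ρ₀ • R₀).mulVec zIm i
        + 2 * a * R₀.mulVec (IIm ρ₀) i
        + b * (if i = k then 1 else 0) = 0) :
    HasDerivAt (fun ρ => f (IRe ρ, IIm ρ, lam ρ, del ρ, ρ))
      (Df (0, 0, 0, 0, 1)
        + dotProduct zRe (Rρ'.mulVec (IIm ρ₀))
        - dotProduct zIm (Rρ'.mulVec (IRe ρ₀))) ρ₀ := by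
  have hl := hlam.hasDerivAt
  have hd := hdel.hasDerivAt
  have hvRe := hIRe.hasDerivAt
  have hvIm := hIIm.hasDerivAt
  have hM₁ : ∀ i j, HasDerivAt (fun ρ => (X₀ - lam ρ • R₀) i j) ((-deriv lam ρ₀ • R₀) i j) ρ₀ :=
    fun i j => by simpa using (hl.mul_const (R₀ i j)).const_sub (X₀ i j)
  have hM₂ : ∀ i j, HasDerivAt (fun ρ => (Rρ ρ - del ρ • R₀) i j)
      ((Rρ' - deriv del ρ₀ • R₀) i j) ρ₀ :=
    fun i j => (hdRρ i j).sub (hd.mul_const (R₀ i j))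
  have e₁ := ((HasDerivAt.mulVec hM₁ hvRe).add (HasDerivAt.mulVec hM₂ hvIm))
    |>.eq_zero_of_eventuallyEq_const hc1
  have e₂ := ((HasDerivAt.mulVec hM₂ hvRe).neg.add (HasDerivAt.mulVec hM₁ hvIm))
    |>.eq_zero_of_eventuallyEq_const hc2
  have e₃ := ((hvRe.dotProduct_mulVec_self hR₀).add (hvIm.dotProduct_mulVec_self hR₀))
    |>.eq_zero_of_eventuallyEq_const hc3
  have e₄ := (hasDerivAt_pi.1 hvIm k).eq_zero_of_eventuallyEq_const hc4
  have hchain := hf.comp_hasDerivAt ρ₀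
    (hvRe.prodMk (hvIm.prodMk (hl.prodMk (hd.prodMk (hasDerivAt_id ρ₀)))))
  refine hchain.congr_deriv ?_
  rw [Df.apply_eq_partials, hA, hB]
  linear_combination adjoint_identity (hX.sub (hR₀.smul _)) ((hsym ρ₀).sub (hR₀.smul _)) hR₀
    e₁ e₂ e₃ e₄ hC hD

/-- Adjoint sensitivity formula for characteristic-mode topology optimization:
given the real constraint system of the lossy characteristic-mode problem and
adjoint variables solving the adjoint equations (A)–(D), the total derivative of
the objective along the design variable is
`∂f/∂ρ + z_Reᵀ·R_ρ'·I_Im − z_Imᵀ·R_ρ'·I_Re`. -/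
theorem adjoint_sensitivity_formula
    (N : ℕ) (hN : 0 < N)
    (X₀ R₀ : Matrix (Fin N) (Fin N) ℝ)
    (hX : X₀.IsSymm) (hR₀ : R₀.IsSymm)
    (Rρ : ℝ → Matrix (Fin N) (Fin N) ℝ) (hsym : ∀ ρ, (Rρ ρ).IsSymm)
    (Rρ' : Matrix (Fin N) (Fin N) ℝ) (ρ₀ : ℝ)
    (hdRρ : ∀ i j, HasDerivAt (fun ρ => Rρ ρ i j) (Rρ' i j) ρ₀)
    (IRe IIm : ℝ → Fin N → ℝ) (lam del : ℝ → ℝ)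
    (hIRe : DifferentiableAt ℝ IRe ρ₀) (hIIm : DifferentiableAt ℝ IIm ρ₀)
    (hlam : DifferentiableAt ℝ lam ρ₀) (hdel : DifferentiableAt ℝ del ρ₀)
    (k : Fin N)
    (hc1 : ∀ᶠ ρ in nhds ρ₀,
      (X₀ - lam ρ • R₀).mulVec (IRe ρ) + (Rρ ρ - del ρ • R₀).mulVec (IIm ρ) = 0)
    (hc2 : ∀ᶠ ρ in nhds ρ₀,
      -((Rρ ρ - del ρ • R₀).mulVec (IRe ρ)) + (X₀ - lam ρ • R₀).mulVec (IIm ρ) = 0)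
    (hc3 : ∀ᶠ ρ in nhds ρ₀,
      dotProduct (IRe ρ) (R₀.mulVec (IRe ρ)) +
        dotProduct (IIm ρ) (R₀.mulVec (IIm ρ)) = 1)
    (hc4 : ∀ᶠ ρ in nhds ρ₀, IIm ρ k = 0)
    (f : (Fin N → ℝ) × (Fin N → ℝ) × ℝ × ℝ × ℝ → ℝ)
    (Df : ((Fin N → ℝ) × (Fin N → ℝ) × ℝ × ℝ × ℝ) →L[ℝ] ℝ)
    (hf : HasFDerivAt f Df (IRe ρ₀, IIm ρ₀, lam ρ₀, del ρ₀, ρ₀))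
    (zRe zIm : Fin N → ℝ) (a b : ℝ)
    (hA : Df (0, 0, 1, 0, 0) =
      dotProduct zRe (R₀.mulVec (IRe ρ₀)) +
        dotProduct zIm (R₀.mulVec (IIm ρ₀)))
    (hB : Df (0, 0, 0, 1, 0) =
      dotProduct zRe (R₀.mulVec (IIm ρ₀)) -
        dotProduct zIm (R₀.mulVec (IRe ρ₀)))
    (hC : ∀ i, Df (Pi.single i 1, 0, 0, 0, 0)
        + (X₀ - lam ρ₀ • R₀).mulVec zRe i
        - (Rρ ρ₀ - del ρ₀ • R₀).mulVec zIm i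
        + 2 * a * R₀.mulVec (IRe ρ₀) i = 0)
    (hD : ∀ i, Df (0, Pi.single i 1, 0, 0, 0)
        + (Rρ ρ₀ - del ρ₀ • R₀).mulVec zRe i
        + (X₀ - lam ρ₀ • R₀).mulVec zIm i
        + 2 * a * R₀.mulVec (IIm ρ₀) i
        + b * (if i = k then 1 else 0) = 0) :
    HasDerivAt (fun ρ => f (IRe ρ, IIm ρ, lam ρ, del ρ, ρ))
      (Df (0, 0, 0, 0, 1)
        + dotProduct zRe (Rρ'.mulVec (IIm ρ₀))
        - dotProduct zIm (Rρ'.mulVec (IRe ρ₀))) ρ₀ :=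
  adjoint_sensitivity_formula_general N X₀ R₀ hX hR₀ Rρ hsym Rρ' ρ₀ hdRρ IRe IIm lam del hIRe hIIm
    hlam hdel k hc1 hc2 hc3 hc4 f Df hf zRe zIm a b hA hB hC hD
end

section
/- Let ξ ∈ ℂ and suppose the kernel of the complex matrix X₀ − i·R_ρ − ξ·R₀ is one-dimensional. Let I, J ∈ ℂ^N satisfy (X₀ − i·R_ρ)·I = ξ·R₀·I, (X₀ − i·R_ρ)·J = ξ·R₀·J, the normalizations I^H·R₀·I = 1 and J^H·R₀·J = 1, and suppose that for some index k the k-th entries of I and J are both real with the k-th entry of I nonzero. Then J = I or J = −I. -/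
open Matrix

theorem Submodule.exists_smul_eq_of_finrank_eq_one {K V : Type*} [DivisionRing K]
    [AddCommGroup V] [Module K V] {W : Submodule K V} (hW : Module.finrank K W = 1)
    {v w : V} (hv : v ∈ W) (hw : w ∈ W) (hv0 : v ≠ 0) : ∃ c : K, c • v = w := by
  have hv0' : (⟨v, hv⟩ : W) ≠ 0 := by simpa using hv0
  obtain ⟨c, hc⟩ := (finrank_eq_one_iff_of_nonzero' _ hv0').mp hW ⟨w, hw⟩
  exact ⟨c, congrArg Subtype.val hc⟩

theorem Matrix.mem_ker_mulVecLin_sub_smul {R n : Type*} [CommRing R] [Fintype n]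
    {A B : Matrix n n R} {ξ : R} {v : n → R} (h : A *ᵥ v = ξ • B *ᵥ v) :
    v ∈ LinearMap.ker (A - ξ • B).mulVecLin := by
  rw [LinearMap.mem_ker, mulVecLin_apply, sub_mulVec, smul_mulVec, h, sub_self]

theorem Matrix.star_smul_dotProduct_mulVec_smul {R n : Type*} [CommRing R] [StarRing R]
    [Fintype n] (M : Matrix n n R) (c : R) (v : n → R) :
    star (c • v) ⬝ᵥ M *ᵥ (c • v) = star c * c * (star v ⬝ᵥ M *ᵥ v) := by
  rw [star_smul, mulVec_smul, smul_dotProduct, dotProduct_smul, smul_eq_mul, smul_eq_mul,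
    mul_assoc]

theorem Complex.im_eq_zero_of_im_mul_eq_zero {c z : ℂ} (hz : z.im = 0) (hz0 : z ≠ 0)
    (h : (c * z).im = 0) : c.im = 0 := by
  have hzre : z.re ≠ 0 := fun hre => hz0 (Complex.ext hre hz)
  rw [mul_im, hz, mul_zero, zero_add] at h
  exact (mul_eq_zero.mp h).resolve_right hzre

theorem Complex.eq_one_or_eq_neg_one_of_im_eq_zero {c : ℂ} (hc : c.im = 0)
    (hcc : star c * c = 1) : c = 1 ∨ c = -1 := by
  rw [show star c = c from conj_eq_iff_im.mpr hc] at hcc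
  exact mul_self_eq_one_iff.mp hcc

theorem lossy_cm_current_unique_up_to_sign_general
    (N : ℕ)
    (X₀ Rρ R₀ : Matrix (Fin N) (Fin N) ℝ)
    (ξ : ℂ)
    (hker : Module.finrank ℂ
      (LinearMap.ker (Matrix.mulVecLin
        (X₀.map Complex.ofReal - Complex.I • Rρ.map Complex.ofReal
          - ξ • R₀.map Complex.ofReal))) = 1)
    (I J : Fin N → ℂ)
    (heigI : (X₀.map Complex.ofReal - Complex.I • Rρ.map Complex.ofReal).mulVec I
            = ξ • (R₀.map Complex.ofReal).mulVec I)
    (heigJ : (X₀.map Complex.ofReal - Complex.I • Rρ.map Complex.ofReal).mulVec J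
            = ξ • (R₀.map Complex.ofReal).mulVec J)
    (hnormI : dotProduct (star I) ((R₀.map Complex.ofReal).mulVec I) = 1)
    (hnormJ : dotProduct (star J) ((R₀.map Complex.ofReal).mulVec J) = 1)
    (k : Fin N)
    (hIk : (I k).im = 0) (hJk : (J k).im = 0) (hIkne : I k ≠ 0) :
    J = I ∨ J = -I := by
  have hI0 : I ≠ 0 := fun h => hIkne (by simp [h])
  obtain ⟨c, rfl⟩ := Submodule.exists_smul_eq_of_finrank_eq_one hker
    (mem_ker_mulVecLin_sub_smul heigI) (mem_ker_mulVecLin_sub_smul heigJ) hI0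
  have hc_real : c.im = 0 := Complex.im_eq_zero_of_im_mul_eq_zero hIk hIkne hJk
  have hc_unit : star c * c = 1 := by
    rwa [star_smul_dotProduct_mulVec_smul, hnormI, mul_one] at hnormJ
  rcases Complex.eq_one_or_eq_neg_one_of_im_eq_zero hc_real hc_unit with rfl | rfl
  · exact Or.inl (one_smul ℂ I)
  · exact Or.inr (neg_one_smul ℂ I)

/-- For a nondegenerate lossy characteristic mode, the normalization and the
phase constraint determine the characteristic current up to sign. -/
theorem lossy_cm_current_unique_up_to_sign
    (N : ℕ) (hN : 0 < N)
    (X₀ Rρ R₀ : Matrix (Fin N) (Fin N) ℝ)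
    (hX : X₀.IsSymm) (hRρ : Rρ.IsSymm) (hR₀ : R₀.IsSymm)
    (hPD : R₀.PosDef)
    (ξ : ℂ)
    (hker : Module.finrank ℂ
      (LinearMap.ker (Matrix.mulVecLin
        (X₀.map Complex.ofReal - Complex.I • Rρ.map Complex.ofReal
          - ξ • R₀.map Complex.ofReal))) = 1)
    (I J : Fin N → ℂ)
    (heigI : (X₀.map Complex.ofReal - Complex.I • Rρ.map Complex.ofReal).mulVec I
            = ξ • (R₀.map Complex.ofReal).mulVec I)
    (heigJ : (X₀.map Complex.ofReal - Complex.I • Rρ.map Complex.ofReal).mulVec J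
            = ξ • (R₀.map Complex.ofReal).mulVec J)
    (hnormI : dotProduct (star I) ((R₀.map Complex.ofReal).mulVec I) = 1)
    (hnormJ : dotProduct (star J) ((R₀.map Complex.ofReal).mulVec J) = 1)
    (k : Fin N)
    (hIk : (I k).im = 0) (hJk : (J k).im = 0) (hIkne : I k ≠ 0) :
    J = I ∨ J = -I :=
  lossy_cm_current_unique_up_to_sign_general N X₀ Rρ R₀ ξ hker I J heigI heigJ hnormI hnormJ k hIk
    hJk hIkne
end
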